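/- Let h and g be real polynomials as above with P(z) = (-1)^m h(z) g(-z) of degree n = deg h + deg g. Then the Hurwitz minors of P satisfy Δ_j(P) = Ω_{2j}(h,g) for j = 1, ..., n. -/

import Mathlib

open Polynomial Finset

/-- Coefficient sequence "from the top": for a polynomial regarded as having
degree `d`, `coeffFrom p d k` is the coefficient of `z^(d-k)` (zero for `k > d`). -/
noncomputable def coeffFrom (p : Polynomial ℝ) (d k : ℕ) : ℝ :=
  if k ≤ d then p.coeff (d - k) else 0

/-- Coefficients `a_0, a_1, ..., a_n` of a polynomial, from the leading one down,
extended by zero. -/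
noncomputable def coeffSeq (p : Polynomial ℝ) : ℕ → ℝ :=
  coeffFrom p p.natDegree

/-- The `j`-th leading principal minor of the infinite Hurwitz matrix built from the
sequence `t_0, t_1, t_2, ...`: rows alternate `(t_1, t_3, t_5, ...)` and
`(t_0, t_2, t_4, ...)`, each pair of rows shifted one column right. -/
noncomputable def hurwitzMinor (t : ℕ → ℝ) (j : ℕ) : ℝ :=
  (Matrix.of fun i k : Fin j =>
    if (i : ℕ) ≤ 2 * (k : ℕ) + 1 then t (2 * (k : ℕ) + 1 - (i : ℕ)) else 0).det

/-- A real polynomial is Hurwitz stable if all its complex roots lie in the open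
left half-plane. -/
def HurwitzStable (p : Polynomial ℝ) : Prop :=
  ∀ z : ℂ, Polynomial.aeval z p = 0 → z.re < 0

/-- `t` is the sequence of Laurent coefficients at infinity of the rational function
`h/g`, where `h` is regarded as having degree `r` and `g` degree `m`:
`h/g = t_0 z^(r-m) + t_1 z^(r-m-1) + ...`, i.e. `b_k = ∑_{i≤k} c_{k-i} t_i`. -/
def IsLaurentSeqOf (t : ℕ → ℝ) (h g : Polynomial ℝ) (r m : ℕ) : Prop :=
  ∀ k, coeffFrom h r k = ∑ i ∈ Finset.range (k + 1), coeffFrom g m (k - i) * t i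

/-- The determinant `Ω_{2j}(h,g)` of the `2j × 2j` matrix interleaving shifted copies
of the coefficient rows `(c_0, c_1, ...)` of `g` and `(b_0, b_1, ...)` of `h`:
(1-indexed) row `2i-1` carries `c_0, c_1, ...` starting in column `2i-1`, and row `2i`
carries `b_0, b_1, ...` starting in column `i`. Here `b = coeffSeq h`, `c = coeffSeq g`
(zero beyond the degree). -/
noncomputable def omegaDet (h g : Polynomial ℝ) (j : ℕ) : ℝ :=
  (Matrix.of fun u v : Fin (2 * j) =>
    if (u : ℕ) % 2 = 0 then
      (if (u : ℕ) ≤ (v : ℕ) then coeffSeq g ((v : ℕ) - (u : ℕ)) else 0)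
    else
      (if (u : ℕ) / 2 ≤ (v : ℕ) then coeffSeq h ((v : ℕ) - (u : ℕ) / 2) else 0)).det
open Polynomial Finset

/-! Auxiliary machinery -/

/-- The interleaved `2j×2j` matrix built from two sequences. -/
noncomputable def interMat (x y : ℕ → ℝ) (j : ℕ) : Matrix (Fin (2 * j)) (Fin (2 * j)) ℝ :=
  Matrix.of fun u v : Fin (2 * j) =>
    if (u : ℕ) % 2 = 0 then
      (if (u : ℕ) ≤ (v : ℕ) then y ((v : ℕ) - (u : ℕ)) else 0)
    else
      (if (u : ℕ) / 2 ≤ (v : ℕ) then x ((v : ℕ) - (u : ℕ) / 2) else 0)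

/-- Even/odd interleaving equivalence. -/
def eoEquiv (j : ℕ) : Fin j ⊕ Fin j ≃ Fin (2 * j) where
  toFun := Sum.elim (fun i => ⟨2 * i, by have := i.isLt; omega⟩)
    (fun i => ⟨2 * i + 1, by have := i.isLt; omega⟩)
  invFun u := if (u : ℕ) % 2 = 0 then Sum.inl ⟨(u : ℕ) / 2, by have := u.isLt; omega⟩
    else Sum.inr ⟨(u : ℕ) / 2, by have := u.isLt; omega⟩
  left_inv := by
    rintro (i | i) <;> simp only [Sum.elim_inl, Sum.elim_inr]
    · have h2 : (2 * (i : ℕ)) % 2 = 0 := by omega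
      simp only [h2, if_true, Fin.ext_iff]
      simp only [Sum.inl.injEq, Fin.ext_iff]
      omega
    · have h2 : ¬ ((2 * (i : ℕ) + 1) % 2 = 0) := by omega
      simp only [h2, if_false]
      simp only [Sum.inr.injEq, Fin.ext_iff]
      omega
  right_inv := by
    intro u
    by_cases h2 : (u : ℕ) % 2 = 0 <;>
      simp only [h2, if_true, if_false, Sum.elim_inl, Sum.elim_inr, Fin.ext_iff] <;> omega

lemma det_eo (j : ℕ) (M : Matrix (Fin (2 * j)) (Fin (2 * j)) ℝ)
    (A Cb D : Matrix (Fin j) (Fin j) ℝ)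
    (hM : M.submatrix (eoEquiv j) (eoEquiv j) = Matrix.fromBlocks A 0 Cb D) :
    M.det = A.det * D.det := by
  rw [← Matrix.det_submatrix_equiv_self (eoEquiv j), hM, Matrix.det_fromBlocks_zero₁₂]

lemma mk_mul_coeff (u w : ℕ → ℝ) (k : ℕ) :
    (PowerSeries.coeff k) (PowerSeries.mk u * PowerSeries.mk w)
      = ∑ s ∈ range (k + 1), u s * w (k - s) := by
  rw [PowerSeries.coeff_mul, Finset.Nat.sum_antidiagonal_eq_sum_range_succ_mk]
  simp [PowerSeries.coeff_mk]

lemma mk_eq_mul (x u w : ℕ → ℝ)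
    (hx : ∀ k, x k = ∑ s ∈ range (k + 1), u s * w (k - s)) :
    PowerSeries.mk x = PowerSeries.mk u * PowerSeries.mk w := by
  apply PowerSeries.ext
  intro k
  rw [PowerSeries.coeff_mk, mk_mul_coeff]
  exact hx k

/-- Toeplitz factorization: the interleaved determinant of `(x, y)` with
`x = t ⊛ y` equals `y 0 ^ (2j) * hurwitzMinor t j`. -/
lemma interMat_det (x y t : ℕ → ℝ)
    (hx : ∀ k, x k = ∑ s ∈ range (k + 1), t s * y (k - s)) (j : ℕ) :
    (interMat x y j).det = y 0 ^ (2 * j) * hurwitzMinor t j := by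
  classical
  set L : Matrix (Fin (2 * j)) (Fin (2 * j)) ℝ := Matrix.of fun u u' =>
    if (u : ℕ) % 2 = 0 then (if u' = u then (1:ℝ) else 0)
    else (if (u : ℕ) / 2 ≤ (u' : ℕ) then t ((u' : ℕ) - (u : ℕ) / 2) else 0) with hL
  set Cm : Matrix (Fin (2 * j)) (Fin (2 * j)) ℝ := Matrix.of fun u v =>
    if (u : ℕ) ≤ (v : ℕ) then y ((v : ℕ) - (u : ℕ)) else 0 with hC
  have hfact : interMat x y j = L * Cm := by
    ext u v
    rw [Matrix.mul_apply]
    by_cases hu : (u : ℕ) % 2 = 0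
    · have : ∀ u' : Fin (2 * j),
          L u u' * Cm u' v = if u' = u then Cm u' v else 0 := by
        intro u'
        simp only [hL, hC, Matrix.of_apply, hu, if_true]
        split_ifs <;> ring
      rw [Finset.sum_congr rfl fun u' _ => this u', Finset.sum_ite_eq' univ u (fun u' => Cm u' v)]
      simp [interMat, hC, hu]
    · simp only [interMat, Matrix.of_apply, hu, if_false]
      have hstep : ∀ u' : Fin (2 * j), L u u' * Cm u' v
          = if (u' : ℕ) ∈ Finset.Icc ((u : ℕ) / 2) (v : ℕ) then
              t ((u' : ℕ) - (u : ℕ) / 2) * y ((v : ℕ) - (u' : ℕ)) else 0 := by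
        intro u'
        simp only [hL, hC, Matrix.of_apply, hu, if_false, Finset.mem_Icc]
        by_cases h1 : (u : ℕ) / 2 ≤ (u' : ℕ)
        · by_cases h2 : (u' : ℕ) ≤ (v : ℕ)
          · rw [if_pos h1, if_pos h2, if_pos ⟨h1, h2⟩]
          · rw [if_pos h1, if_neg h2, mul_zero,
              if_neg (show ¬((u : ℕ) / 2 ≤ (u' : ℕ) ∧ (u' : ℕ) ≤ (v : ℕ)) from fun hc => h2 hc.2)]
        · rw [if_neg h1, zero_mul,
            if_neg (show ¬((u : ℕ) / 2 ≤ (u' : ℕ) ∧ (u' : ℕ) ≤ (v : ℕ)) from fun hc => h1 hc.1)]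
      rw [Finset.sum_congr rfl fun u' _ => hstep u']
      rw [Fin.sum_univ_eq_sum_range (fun n => if n ∈ Finset.Icc ((u : ℕ) / 2) (v : ℕ) then
        t (n - (u : ℕ) / 2) * y ((v : ℕ) - n) else 0)]
      rw [Finset.sum_ite_mem]
      have hsub : Finset.range (2 * j) ∩ Finset.Icc ((u : ℕ) / 2) (v : ℕ)
          = Finset.Icc ((u : ℕ) / 2) (v : ℕ) := by
        apply Finset.inter_eq_right.mpr
        intro n hn
        simp only [Finset.mem_Icc] at hn
        have := v.isLt
        simp only [Finset.mem_range]
        omega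
      rw [hsub]
      by_cases hiv : (u : ℕ) / 2 ≤ (v : ℕ)
      · rw [if_pos hiv, hx ((v : ℕ) - (u : ℕ) / 2)]
        rw [← Finset.Ico_add_one_right_eq_Icc, Finset.sum_Ico_eq_sum_range]
        have hn : (v : ℕ) + 1 - (u : ℕ) / 2 = ((v : ℕ) - (u : ℕ) / 2) + 1 := by omega
        rw [hn]
        apply Finset.sum_congr rfl
        intro s hs
        simp only [Finset.mem_range] at hs
        have e1 : (u : ℕ) / 2 + s - (u : ℕ) / 2 = s := by omega
        have e2 : (v : ℕ) - ((u : ℕ) / 2 + s) = (v : ℕ) - (u : ℕ) / 2 - s := by omega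
        rw [e1, e2]
      · rw [if_neg hiv]
        have hemp : Finset.Icc ((u : ℕ) / 2) (v : ℕ) = ∅ := by
          apply Finset.Icc_eq_empty
          omega
        rw [hemp, Finset.sum_empty]
  have hdetC : Cm.det = y 0 ^ (2 * j) := by
    have htri : Cm.BlockTriangular id := by
      intro a b hab
      simp only [hC, Matrix.of_apply, id] at hab ⊢
      rw [if_neg]
      exact fun hc => absurd hc (by exact Nat.not_le_of_lt hab)
    rw [Matrix.det_of_upperTriangular htri]
    have : ∀ a : Fin (2 * j), Cm a a = y 0 := by
      intro a
      simp [hC]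
    rw [Finset.prod_congr rfl fun a _ => this a, Finset.prod_const, Finset.card_univ,
      Fintype.card_fin]
  have hdetL : L.det = hurwitzMinor t j := by
    have hblk : L.submatrix (eoEquiv j) (eoEquiv j)
        = Matrix.fromBlocks 1 0
            (Matrix.of fun i k : Fin j => if (i : ℕ) ≤ 2 * (k : ℕ) then t (2 * (k : ℕ) - (i : ℕ)) else 0)
            (Matrix.of fun i k : Fin j =>
              if (i : ℕ) ≤ 2 * (k : ℕ) + 1 then t (2 * (k : ℕ) + 1 - (i : ℕ)) else 0) := by
      ext (i | i) (k | k) <;>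
        simp only [Matrix.submatrix_apply, eoEquiv, Equiv.coe_fn_mk, Sum.elim_inl, Sum.elim_inr,
          Matrix.fromBlocks_apply₁₁, Matrix.fromBlocks_apply₁₂, Matrix.fromBlocks_apply₂₁,
          Matrix.fromBlocks_apply₂₂, hL, Matrix.of_apply]
      · have h2 : (2 * (i : ℕ)) % 2 = 0 := by omega
        simp only [h2, if_true, Matrix.one_apply, Fin.mk.injEq]
        rcases eq_or_ne (i : ℕ) (k : ℕ) with hik | hik
        · rw [if_pos (by omega), if_pos (Fin.ext hik)]
        · rw [if_neg (by omega), if_neg (fun hc => hik (congrArg Fin.val hc))]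
      · have h2 : (2 * (i : ℕ)) % 2 = 0 := by omega
        simp only [h2, if_true, Matrix.zero_apply, Fin.mk.injEq]
        rw [if_neg (by omega)]
      · have h2 : ¬ ((2 * (i : ℕ) + 1) % 2 = 0) := by omega
        have h3 : (2 * (i : ℕ) + 1) / 2 = (i : ℕ) := by omega
        simp only [h2, if_false, h3]
      · have h2 : ¬ ((2 * (i : ℕ) + 1) % 2 = 0) := by omega
        have h3 : (2 * (i : ℕ) + 1) / 2 = (i : ℕ) := by omega
        simp only [h2, if_false, h3]
    have := det_eo j L 1 _ _ hblk
    rw [this, Matrix.det_one, one_mul]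
    rfl
  rw [hfact, Matrix.det_mul, hdetL, hdetC, mul_comm]

/-- Block structure when the second sequence vanishes at odd indices. -/
lemma interMat_det_even (a d : ℕ → ℝ) (hd : ∀ s, d (2 * s + 1) = 0) (j : ℕ) :
    (interMat a d j).det = d 0 ^ j * hurwitzMinor a j := by
  classical
  have hblk : (interMat a d j).submatrix (eoEquiv j) (eoEquiv j)
      = Matrix.fromBlocks
          (Matrix.of fun i k : Fin j => if (i : ℕ) ≤ (k : ℕ) then d (2 * (k : ℕ) - 2 * (i : ℕ)) else 0) 0
          (Matrix.of fun i k : Fin j => if (i : ℕ) ≤ 2 * (k : ℕ) then a (2 * (k : ℕ) - (i : ℕ)) else 0)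
          (Matrix.of fun i k : Fin j =>
            if (i : ℕ) ≤ 2 * (k : ℕ) + 1 then a (2 * (k : ℕ) + 1 - (i : ℕ)) else 0) := by
    ext (i | i) (k | k) <;>
      simp only [Matrix.submatrix_apply, eoEquiv, Equiv.coe_fn_mk, Sum.elim_inl, Sum.elim_inr,
        Matrix.fromBlocks_apply₁₁, Matrix.fromBlocks_apply₁₂, Matrix.fromBlocks_apply₂₁,
        Matrix.fromBlocks_apply₂₂, interMat, Matrix.of_apply]
    · have h2 : (2 * (i : ℕ)) % 2 = 0 := by omega
      simp only [h2, if_true]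
      by_cases hik : (i : ℕ) ≤ (k : ℕ)
      · rw [if_pos (by omega), if_pos hik]
      · rw [if_neg (by omega), if_neg hik]
    · have h2 : (2 * (i : ℕ)) % 2 = 0 := by omega
      simp only [h2, if_true, Matrix.zero_apply]
      by_cases hik : 2 * (i : ℕ) ≤ 2 * (k : ℕ) + 1
      · rw [if_pos hik]
        have h4 : 2 * (k : ℕ) + 1 - 2 * (i : ℕ) = 2 * ((k : ℕ) - (i : ℕ)) + 1 := by omega
        rw [h4, hd]
      · rw [if_neg hik]
    · have h2 : ¬ ((2 * (i : ℕ) + 1) % 2 = 0) := by omega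
      have h3 : (2 * (i : ℕ) + 1) / 2 = (i : ℕ) := by omega
      simp only [h2, if_false, h3]
    · have h2 : ¬ ((2 * (i : ℕ) + 1) % 2 = 0) := by omega
      have h3 : (2 * (i : ℕ) + 1) / 2 = (i : ℕ) := by omega
      simp only [h2, if_false, h3]
  have := det_eo j (interMat a d j) _ _ _ hblk
  rw [this]
  congr 1
  · have htri : Matrix.BlockTriangular
        (Matrix.of fun i k : Fin j => if (i : ℕ) ≤ (k : ℕ) then d (2 * (k : ℕ) - 2 * (i : ℕ)) else 0) id := by
      intro a' b' hab
      simp only [Matrix.of_apply, id] at hab ⊢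
      rw [if_neg (by exact fun hc => absurd hc (by simp only [Fin.lt_iff_val_lt_val] at hab; omega))]
    rw [Matrix.det_of_upperTriangular htri]
    have : ∀ a' : Fin j, (Matrix.of fun i k : Fin j =>
        if (i : ℕ) ≤ (k : ℕ) then d (2 * (k : ℕ) - 2 * (i : ℕ)) else 0) a' a' = d 0 := by
      intro a'
      simp
    rw [Finset.prod_congr rfl fun a' _ => this a', Finset.prod_const, Finset.card_univ,
      Fintype.card_fin]
/-! Laurent sequence construction -/

noncomputable def seqT (b c : ℕ → ℝ) : ℕ → ℝ
  | k => (b k - ∑ i ∈ (Finset.range k).attach, c (k - (i : ℕ)) * seqT b c (i : ℕ)) / c 0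
  decreasing_by exact Finset.mem_range.mp i.2

lemma seqT_spec (b c : ℕ → ℝ) (hc : c 0 ≠ 0) (k : ℕ) :
    b k = ∑ i ∈ Finset.range (k + 1), c (k - i) * seqT b c i := by
  have hk : seqT b c k
      = (b k - ∑ i ∈ (Finset.range k).attach, c (k - (i : ℕ)) * seqT b c (i : ℕ)) / c 0 := by
    rw [seqT]
  rw [Finset.sum_range_succ, Nat.sub_self, hk,
    ← Finset.sum_attach (Finset.range k) (fun i => c (k - i) * seqT b c i)]
  field_simp
  ring

/-! Polynomial coefficient lemmas -/

lemma coeffFrom_eq_reflect (p : Polynomial ℝ) (dp : ℕ) (hp : p.natDegree ≤ dp) (k : ℕ) :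
    coeffFrom p dp k = (p.reflect dp).coeff k := by
  unfold coeffFrom
  split
  · rw [Polynomial.coeff_reflect, Polynomial.revAt_le (by assumption)]
  · rw [Polynomial.coeff_reflect, Polynomial.revAt_eq_self_of_lt (by omega)]
    exact (Polynomial.coeff_eq_zero_of_natDegree_lt (by omega)).symm

lemma coeff_comp_neg_X (p : Polynomial ℝ) (k : ℕ) :
    (p.comp (-X)).coeff k = (-1) ^ k * p.coeff k := by
  induction p using Polynomial.induction_on' with
  | add p q hp hq => simp only [add_comp, coeff_add, hp, hq]; ring
  | monomial n a =>
    have h1 : ((monomial n a).comp (-X)) = Polynomial.C ((-1) ^ n * a) * X ^ n := by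
      rw [← Polynomial.C_mul_X_pow_eq_monomial, mul_comp, C_comp, pow_comp, X_comp, neg_pow]
      rw [map_mul, map_pow, map_neg, map_one]
      ring
    rw [h1, Polynomial.coeff_C_mul, Polynomial.coeff_X_pow, Polynomial.coeff_monomial]
    by_cases hk : k = n
    · subst hk; simp
    · rw [if_neg hk, if_neg (fun hnk => hk hnk.symm)]; ring

lemma coeffFrom_mul_from (p q : Polynomial ℝ) (dp dq : ℕ)
    (hp : p.natDegree ≤ dp) (hq : q.natDegree ≤ dq) (k : ℕ) :
    coeffFrom (p * q) (dp + dq) k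
      = ∑ s ∈ Finset.range (k + 1), coeffFrom p dp s * coeffFrom q dq (k - s) := by
  rw [coeffFrom_eq_reflect (p * q) (dp + dq)
    (le_trans (Polynomial.natDegree_mul_le) (add_le_add hp hq)),
    Polynomial.reflect_mul p q hp hq, Polynomial.coeff_mul,
    Finset.Nat.sum_antidiagonal_eq_sum_range_succ_mk]
  exact Finset.sum_congr rfl fun s _ => by
    rw [coeffFrom_eq_reflect p dp hp, coeffFrom_eq_reflect q dq hq]

/-- The Hurwitz minors of `P(z) = (-1)^m h(z) g(-z)` coincide with the determinants
`Ω_{2j}(h,g)`: `Δ_j(P) = Ω_{2j}(h,g)` for `j = 1, ..., n = deg h + deg g`. -/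
theorem hurwitz_dets_eq_omega (h g : Polynomial ℝ) (r m : ℕ)
    (hr : h.natDegree = r) (hm : g.natDegree = m)
    (hb0 : 0 < h.leadingCoeff) (hc0 : 0 < g.leadingCoeff) :
    ∀ j ∈ Finset.Icc 1 (r + m),
      hurwitzMinor (coeffFrom (Polynomial.C ((-1 : ℝ) ^ m) * h * g.comp (-Polynomial.X)) (r + m)) j
        = omegaDet h g j := by
  intro j _
  set P : Polynomial ℝ := Polynomial.C ((-1 : ℝ) ^ m) * h * g.comp (-Polynomial.X) with hP
  set b : ℕ → ℝ := coeffFrom h r with hb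
  set c : ℕ → ℝ := coeffFrom g m with hc
  have hc0' : c 0 ≠ 0 := by
    have hcl : c 0 = g.leadingCoeff := by
      rw [hc]
      simp only [coeffFrom, Nat.zero_le, if_true, Nat.sub_zero, ← hm]
      exact Polynomial.coeff_natDegree
    rw [hcl]
    exact ne_of_gt hc0
  set t : ℕ → ℝ := seqT b c with ht
  have hbt : ∀ k, b k = ∑ s ∈ Finset.range (k + 1), t s * c (k - s) := by
    intro k
    rw [seqT_spec b c hc0' k]
    exact Finset.sum_congr rfl fun i _ => mul_comm _ _
  set gt : Polynomial ℝ := Polynomial.C ((-1 : ℝ) ^ m) * g.comp (-Polynomial.X) with hgt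
  have hgtdeg : gt.natDegree ≤ m := by
    refine le_trans (Polynomial.natDegree_C_mul_le _ _)
      (le_trans Polynomial.natDegree_comp_le ?_)
    simp [hm]
  set ct : ℕ → ℝ := coeffFrom gt m with hct
  have hctc : ∀ s, ct s = (-1) ^ s * c s := by
    intro s
    rw [hct, hc]
    simp only [coeffFrom]
    split
    · rename_i hs
      rw [hgt, Polynomial.coeff_C_mul, coeff_comp_neg_X]
      have hpow : ((-1 : ℝ)) ^ m * (-1) ^ (m - s) = (-1) ^ s := by
        rw [← pow_add]
        have h2 : m + (m - s) = s + 2 * (m - s) := by omega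
        rw [h2, pow_add, pow_mul]
        norm_num
      rw [← mul_assoc, hpow]
    · ring
  set a : ℕ → ℝ := coeffFrom P (r + m) with ha
  have haP : ∀ k, a k = ∑ s ∈ Finset.range (k + 1), ct s * b (k - s) := by
    intro k
    have hPeq : P = gt * h := by rw [hP, hgt]; ring
    have hstep : coeffFrom P (r + m) k = coeffFrom (gt * h) (m + r) k := by
      rw [hPeq, Nat.add_comm]
    rw [ha, hstep, coeffFrom_mul_from gt h m r hgtdeg (le_of_eq hr), hct, hb]
  set d : ℕ → ℝ := fun k => ∑ s ∈ Finset.range (k + 1), ct s * c (k - s) with hd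
  have hdodd : ∀ s, d (2 * s + 1) = 0 := by
    intro s
    set k := 2 * s + 1 with hk
    set f : ℕ → ℝ := fun i => (-1) ^ i * (c i * c (k - i)) with hf
    have hdk : d k = ∑ i ∈ Finset.range (k + 1), f i := by
      rw [hd]
      exact Finset.sum_congr rfl fun i _ => by rw [hctc, hf]; ring
    have hrefl := Finset.sum_range_reflect f (k + 1)
    have hneg : ∀ i ∈ Finset.range (k + 1), f (k + 1 - 1 - i) = - f i := by
      intro i hi
      rw [Finset.mem_range] at hi
      have hik : i ≤ k := by omega
      have h5 : k + 1 - 1 - i = k - i := by omega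
      have h6 : k - (k - i) = i := by omega
      rw [h5, hf]
      simp only []
      rw [h6]
      have h8 : ((-1 : ℝ)) ^ i * (-1) ^ i = 1 := by
        rw [← pow_add, ← two_mul, pow_mul]
        norm_num
      have h7 : ((-1 : ℝ)) ^ (k - i) * (-1) ^ i = -1 := by
        rw [← pow_add, Nat.sub_add_cancel hik]
        exact Odd.neg_one_pow ⟨s, by omega⟩
      have hsign : ((-1 : ℝ)) ^ (k - i) = -(-1) ^ i :=
        calc ((-1 : ℝ)) ^ (k - i) = (-1) ^ (k - i) * ((-1) ^ i * (-1) ^ i) := by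
              rw [h8, mul_one]
          _ = ((-1) ^ (k - i) * (-1) ^ i) * (-1) ^ i := by ring
          _ = -(-1) ^ i := by rw [h7]; ring
      rw [hsign]
      ring
    rw [Finset.sum_congr rfl hneg, Finset.sum_neg_distrib] at hrefl
    rw [hdk]
    linarith [hrefl, hdk]
  have hat : ∀ k, a k = ∑ s ∈ Finset.range (k + 1), t s * d (k - s) := by
    have e1 : PowerSeries.mk b = PowerSeries.mk t * PowerSeries.mk c := mk_eq_mul _ _ _ hbt
    have e2 : PowerSeries.mk a = PowerSeries.mk ct * PowerSeries.mk b := mk_eq_mul _ _ _ haP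
    have e3 : PowerSeries.mk d = PowerSeries.mk ct * PowerSeries.mk c :=
      mk_eq_mul _ _ _ (fun k => rfl)
    have e4 : PowerSeries.mk a = PowerSeries.mk t * PowerSeries.mk d := by
      rw [e2, e1, e3]
      ring
    intro k
    have h9 := congrArg (PowerSeries.coeff k) e4
    rwa [PowerSeries.coeff_mk, mk_mul_coeff] at h9
  have h1 : (interMat b c j).det = c 0 ^ (2 * j) * hurwitzMinor t j := interMat_det b c t hbt j
  have h2 : (interMat a d j).det = d 0 ^ (2 * j) * hurwitzMinor t j := interMat_det a d t hat j
  have h3 : (interMat a d j).det = d 0 ^ j * hurwitzMinor a j := interMat_det_even a d hdodd j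
  have hd0 : d 0 = c 0 ^ 2 := by
    show (∑ s ∈ Finset.range 1, ct s * c (0 - s)) = c 0 ^ 2
    rw [Finset.sum_range_one, hctc 0]
    norm_num
    ring
  have hcs1 : coeffSeq h = b := by
    unfold coeffSeq
    rw [hr]
  have hcs2 : coeffSeq g = c := by
    unfold coeffSeq
    rw [hm]
  have hΩ : omegaDet h g j = (interMat b c j).det := by
    unfold omegaDet interMat
    rw [hcs1, hcs2]
  have hd0ne : d 0 ^ j ≠ 0 := pow_ne_zero _ (by rw [hd0]; exact pow_ne_zero _ hc0')
  have key : d 0 ^ j * hurwitzMinor a j = d 0 ^ j * (d 0 ^ j * hurwitzMinor t j) := by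
    rw [← h3, h2]
    ring
  have hΔa : hurwitzMinor a j = d 0 ^ j * hurwitzMinor t j := mul_left_cancel₀ hd0ne key
  rw [hΔa, hΩ, h1, hd0]
  ring
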